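/- arXiv:1105.0746 — 5 statements merged into one kernel-verified Lean document; each statement's English description precedes it below -/
import Mathlib

section
/- Let k̃ be a field and S ⊂ ℙ¹(k̃) a finite set. Then the set of separable rational maps R on ℙ¹(k̃) with R⁻¹{0,1,∞} ⊆ S is finite. -/
/-!
For `R = a / b` in lowest terms with `b` monic, the zeros of `a`, `b` and `a - b` are the finite
points of `R⁻¹{0, ∞, 1}`, so they lie in the finite set `T = S ∩ K`. Separability says the Wronskian
of `a` and `b` is nonzero, so the Mason–Stothers theorem applied to `a + (-b) + (b - a) = 0` bounds
all three degrees strictly by `#T`. Hence the root multisets of `a`, `b`, `a - b` range over a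
finite set, and they determine `R`: `b` is monic, and if `a, a'` have the same roots and so do `a - b, a' - b`,
then `a' = u a` and `a' - b = v (a - b)`, which forces `u = v = 1` unless `a` is a multiple of `b`.
-/

open Polynomial
open scoped Classical

/-- Evaluation of a rational function `R ∈ K(T)` as a self-map of the projective line
`ℙ¹(K) = K ∪ {∞}`, encoded as `Option K` with `none` playing the role of `∞`. -/
noncomputable def evalP1 {K : Type*} [Field K] (R : RatFunc K) : Option K → Option K
  | none =>
      if R.num.natDegree > R.denom.natDegree then none
      else some (R.num.coeff R.denom.natDegree / R.denom.leadingCoeff)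
  | some z =>
      if R.denom.eval z = 0 then none
      else some (R.num.eval z / R.denom.eval z)

theorem Multiset.le_card_nsmul_of_forall_mem {α : Type*} {m : Multiset α}
    {s : Finset α} (hm : ∀ x ∈ m, x ∈ s) : m ≤ Multiset.card m • s.val := by
  refine Multiset.le_iff_count.mpr fun a => ?_
  by_cases ha : a ∈ s
  · rw [Multiset.count_nsmul, Multiset.count_eq_one_of_mem s.nodup ha, mul_one]
    exact Multiset.count_le_card a m
  · rw [Multiset.count_eq_zero_of_notMem fun h => ha (hm a h)]
    exact Nat.zero_le _

namespace Polynomial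

open UniqueFactorizationMonoid

variable {K : Type*} [Field K]

theorem wronskian_C_mul_self (c : K) (p : K[X]) : wronskian (C c * p) p = 0 := by
  simp only [wronskian, derivative_C_mul]
  ring

variable [IsAlgClosed K]

theorem exists_eq_C_mul_of_roots_eq {p q : K[X]} (hp : p ≠ 0) (h : p.roots = q.roots) :
    ∃ u : K, q = C u * p := by
  refine ⟨q.leadingCoeff / p.leadingCoeff, ?_⟩
  set P := (p.roots.map fun x => X - C x).prod
  have hP : p = C p.leadingCoeff * P := (IsAlgClosed.splits p).eq_prod_roots
  have hQ : q = C q.leadingCoeff * P := by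
    simp only [P, h]
    exact (IsAlgClosed.splits q).eq_prod_roots
  calc q = C q.leadingCoeff * P := hQ
    _ = C (q.leadingCoeff / p.leadingCoeff) * (C p.leadingCoeff * P) := by
      rw [← mul_assoc, ← C_mul, div_mul_cancel₀ _ (leadingCoeff_ne_zero.mpr hp)]
    _ = C (q.leadingCoeff / p.leadingCoeff) * p := by rw [← hP]

theorem natDegree_radical_le_card_roots_toFinset {p : K[X]} (hp : p ≠ 0) :
    (radical p).natDegree ≤ p.roots.toFinset.card := by
  have hnodup : (radical p).roots.Nodup :=
    nodup_roots (PerfectField.separable_iff_squarefree.mpr squarefree_radical)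
  rw [← IsAlgClosed.card_roots_eq_natDegree, ← Multiset.toFinset_card_of_nodup hnodup]
  exact Finset.card_le_card
    (Multiset.toFinset_subset.mpr (Multiset.subset_of_le (roots.le_of_dvd hp radical_dvd_self)))

/-- Mason–Stothers, with the degree of the radical bounded by the number of distinct roots. -/
theorem natDegree_lt_card_of_wronskian_ne_zero {a b : K[X]} {T : Finset K}
    (hab : IsCoprime a b) (hw : wronskian a b ≠ 0)
    (hT : ∀ z, (a * b * (a - b)).IsRoot z → z ∈ T) :
    a.natDegree < T.card ∧ b.natDegree < T.card ∧ (a - b).natDegree < T.card := by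
  have ha : a ≠ 0 := by rintro rfl; exact hw (wronskian_zero_left b)
  have hb : b ≠ 0 := by rintro rfl; exact hw (wronskian_zero_right a)
  have hba : b - a ≠ 0 := by
    rw [sub_ne_zero]; rintro rfl; exact hw (wronskian_self_eq_zero b)
  have hprod : a * -b * (b - a) = a * b * (a - b) := by ring
  have hrad : (radical (a * -b * (b - a))).natDegree ≤ T.card := by
    rw [hprod]
    refine (natDegree_radical_le_card_roots_toFinset ?_).trans (Finset.card_le_card ?_)
    · rw [← hprod]; exact mul_ne_zero (mul_ne_zero ha (neg_ne_zero.mpr hb)) hba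
    · intro z hz
      exact hT z (isRoot_of_mem_roots (Multiset.mem_toFinset.mp hz))
  rcases Polynomial.abc ha (neg_ne_zero.mpr hb) hba hab.neg_right (by ring) with
    ⟨hda, hdb, hdc⟩ | ⟨hda, hdb, -⟩
  · have hdc' : (b - a).natDegree = (a - b).natDegree := by rw [← natDegree_neg, neg_sub]
    rw [natDegree_neg] at hdb
    rw [hdc'] at hdc
    omega
  · rw [derivative_neg, neg_eq_zero] at hdb
    exact absurd (by simp [wronskian, hda, hdb]) hw

/-- The roots fix `p` and `p - d` up to scalars; two different scalings would make `p` a constant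
multiple of `d`, which kills the Wronskian. -/
theorem eq_of_roots_eq_of_roots_sub_eq {p q d : K[X]} (hw : wronskian p d ≠ 0)
    (h : p.roots = q.roots) (hd : (p - d).roots = (q - d).roots) : p = q := by
  have hp : p ≠ 0 := by rintro rfl; exact hw (wronskian_zero_left d)
  have hd0 : d ≠ 0 := by rintro rfl; exact hw (wronskian_zero_right p)
  have hpd : p - d ≠ 0 := by rw [sub_ne_zero]; rintro rfl; exact hw (wronskian_self_eq_zero p)
  obtain ⟨u, hu⟩ := exists_eq_C_mul_of_roots_eq hp h
  obtain ⟨v, hv⟩ := exists_eq_C_mul_of_roots_eq hpd hd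
  have hlin : C (u - v) * p = C (1 - v) * d := by
    rw [C_sub, C_sub, C_1]
    linear_combination hv - hu
  by_cases huv : u = v
  · subst huv
    have hu1 : u = 1 := by
      rw [sub_self, C_0, zero_mul, eq_comm, mul_eq_zero, C_eq_zero, sub_eq_zero] at hlin
      exact (hlin.resolve_right hd0).symm
    rw [hu, hu1, C_1, one_mul]
  · have hpd' : p = C ((u - v)⁻¹ * (1 - v)) * d := by
      rw [C_mul, mul_assoc, ← hlin, ← mul_assoc, ← C_mul, inv_mul_cancel₀ (sub_ne_zero.mpr huv),
        C_1, one_mul]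
    exact absurd (hpd' ▸ wronskian_C_mul_self _ d) hw

theorem finite_setOf_isCoprime_monic_wronskian_ne_zero (T : Finset K) :
    {ab : K[X] × K[X] | IsCoprime ab.1 ab.2 ∧ ab.2.Monic ∧ wronskian ab.1 ab.2 ≠ 0 ∧
      ∀ z, (ab.1 * ab.2 * (ab.1 - ab.2)).IsRoot z → z ∈ T}.Finite := by
  set M := T.card • T.val
  refine Set.Finite.of_finite_image
    (f := fun ab : K[X] × K[X] => (ab.1.roots, ab.2.roots, (ab.1 - ab.2).roots)) ?_ ?_
  · refine ((Set.finite_Iic M).prod ((Set.finite_Iic M).prod (Set.finite_Iic M))).subset ?_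
    rintro _ ⟨⟨a, b⟩, ⟨hab, -, hw, hT⟩, rfl⟩
    obtain ⟨ha, hb, hab'⟩ := natDegree_lt_card_of_wronskian_ne_zero hab hw hT
    have roots_le : ∀ p, p ∣ a * b * (a - b) → p.natDegree < T.card → p.roots ≤ M := by
      intro p hdvd hdeg
      refine (Multiset.le_card_nsmul_of_forall_mem fun z hz => ?_).trans
        (nsmul_le_nsmul_left (Multiset.zero_le _) ((card_roots' p).trans hdeg.le))
      exact hT z ((isRoot_of_mem_roots hz).dvd hdvd)
    exact ⟨roots_le a (dvd_mul_of_dvd_left (dvd_mul_right a b) _) ha,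
      roots_le b (dvd_mul_of_dvd_left (dvd_mul_left b a) _) hb, roots_le _ (dvd_mul_left _ _) hab'⟩
  · rintro ⟨a, b⟩ ⟨-, hb, hw, -⟩ ⟨a', b'⟩ ⟨-, hb', -, -⟩ h
    simp only [Prod.mk.injEq] at h
    obtain ⟨ha, hbb, had⟩ := h
    obtain rfl : b = b' := by
      rw [(IsAlgClosed.splits b).eq_prod_roots_of_monic hb,
        (IsAlgClosed.splits b').eq_prod_roots_of_monic hb', hbb]
    exact Prod.ext (eq_of_roots_eq_of_roots_sub_eq hw ha had) rfl

end Polynomial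

theorem evalP1_some_mem_of_isRoot {K : Type*} [Field K] {R : RatFunc K} {z : K}
    (h : (R.num * R.denom * (R.num - R.denom)).IsRoot z) :
    evalP1 R (some z) ∈ ({some 0, some 1, none} : Set (Option K)) := by
  simp only [IsRoot, eval_mul, eval_sub, mul_eq_zero, sub_eq_zero] at h
  by_cases hd : R.denom.eval z = 0
  · simp [evalP1, hd]
  · rcases h with (h | h) | h
    · simp [evalP1, hd, h]
    · exact absurd h hd
    · simp [evalP1, hd, h]

/-- Separability is encoded as the non-vanishing of `(num R)' · denom R − num R · (denom R)'`,
which rules out exactly the maps `Q(z^p)` in characteristic `p > 0` and the constants. -/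
theorem montel_stmt1 {K : Type*} [Field K] [IsAlgClosed K] (S : Finset (Option K)) :
    {R : RatFunc K |
        derivative R.num * R.denom - R.num * derivative R.denom ≠ 0 ∧
        ∀ x : Option K,
          evalP1 R x ∈ ({some 0, some 1, none} : Set (Option K)) → x ∈ S}.Finite := by
  set T : Finset K := S.preimage some (Option.some_injective K).injOn
  refine ((finite_setOf_isCoprime_monic_wronskian_ne_zero T).preimage
    (f := fun R : RatFunc K => (R.num, R.denom)) ?_).subset ?_
  · intro R _ R' _ h
    simp only [Prod.mk.injEq] at h
    rw [← R.num_div_denom, ← R'.num_div_denom, h.1, h.2]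
  · rintro R ⟨hsep, hS⟩
    refine ⟨R.isCoprime_num_denom, R.monic_denom, fun hw => hsep ?_,
      fun z hz => Finset.mem_preimage.mpr (hS _ (evalP1_some_mem_of_isRoot hz))⟩
    rw [wronskian] at hw
    linear_combination -hw
end

section
/- Let k be a non-archimedean field and R ∈ k(T) a rational map of degree d ≥ 2 all of whose fixed points p ∈ ℙ¹(k) are simple (multipliers R'(p) ≠ 1). If |R'(p)| > 1 for every fixed point p, then the Woods Hole identity Σ_{R(p)=p} 1/(1 − R'(p)) = 1 fails; consequently R admits at least one fixed point with |R'(p)| ≤ 1. -/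
/-- (Woods Hole argument over a non-archimedean field.)  Given the finitely many
fixed points of a rational map of degree ≥ 2, with multipliers λ_p ≠ 1, satisfying the Woods
Hole identity Σ 1/(1 − λ_p) = 1, not all multipliers can satisfy |λ_p| > 1: there is at
least one fixed point with |λ_p| ≤ 1. -/
theorem montel_stmt5 {k : Type*} [NormedField k] [IsUltrametricDist k]
    {ι : Type*} (F : Finset ι) (hF : F.Nonempty) (lam : ι → k)
    (hone : ∀ p ∈ F, lam p ≠ 1)
    (hWH : ∑ p ∈ F, (1 - lam p)⁻¹ = 1) :
    ∃ p ∈ F, ‖lam p‖ ≤ 1 := by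
  by_contra h
  push_neg at h
  have hterm : ∀ p ∈ F, ‖(1 - lam p)⁻¹‖ < 1 := by
    intro p hp
    have h1 : (1:ℝ) < ‖lam p‖ := h p hp
    have hne : ‖(1:k)‖ ≠ ‖-lam p‖ := by
      simp only [norm_one, norm_neg]; exact ne_of_lt h1
    have : ‖1 - lam p‖ = ‖lam p‖ := by
      rw [sub_eq_add_neg, IsUltrametricDist.norm_add_eq_max_of_norm_ne_norm hne]
      simp [max_eq_right (le_of_lt h1)]
    rw [norm_inv, this]
    exact inv_lt_one_of_one_lt₀ h1
  have hsum : ‖∑ p ∈ F, (1 - lam p)⁻¹‖ < 1 := by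
    calc ‖∑ p ∈ F, (1 - lam p)⁻¹‖ ≤ F.sup' hF (fun p => ‖(1 - lam p)⁻¹‖) :=
          hF.norm_sum_le_sup'_norm _
      _ < 1 := by
          apply Finset.sup'_lt_iff hF |>.mpr
          intro p hp; exact hterm p hp
  rw [hWH, norm_one] at hsum
  exact lt_irrefl 1 hsum
end

section
/- Let (ℓ_n)_{n≥5} be integers with ℓ₅ < 0, ℓ₆ < 3ℓ₅, and ℓ_{n+2} = (n+1)(ℓ_{n+1} − ℓ_n). Fix L > 0 (playing the role of log|λ|) and set φ(τ) = sup_{n≥5}(ℓ_n·L + nτ) for τ ∈ ℝ. Then for every n ≥ 5 and every τ with (ℓ_n − ℓ_{n+1})L ≤ τ ≤ (ℓ_{n+1} − ℓ_{n+2})L, the supremum defining φ(τ) is attained at the index n+1, i.e. φ(τ) = ℓ_{n+1}L + (n+1)τ; moreover φ maps the point τ_n := (ℓ_n − ℓ_{n+1})L to τ_{n+1} and maps (τ_n, τ_{n+1}) onto (τ_{n+1}, τ_{n+2}). -/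
/-- The piecewise affine function φ(τ) = sup_{m≥5}(ℓ_m·L + mτ), representing
log sup_{|z|≤e^τ} |f(z)| for f(z) = Σ_{m≥5} λ^{ℓ_m} z^m with L = log|λ|. -/
noncomputable def phi9 (l : ℕ → ℤ) (L : ℝ) (τ : ℝ) : ℝ :=
  ⨆ m : ℕ, (((l (m + 5) : ℤ) : ℝ) * L + ((m : ℝ) + 5) * τ)

/-- The critical values τ_n = (ℓ_n − ℓ_{n+1})·L. -/
noncomputable def tau9 (l : ℕ → ℤ) (L : ℝ) (n : ℕ) : ℝ :=
  ((l n - l (n + 1) : ℤ) : ℝ) * L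

/-!
Write `d n = ℓ_{n+1} − ℓ_n`. Subtracting the recursion at `n` from the one at `n + 1` gives
`d (n+2) − d (n+1) = (n+1) (d (n+1) − d n)`, and `ℓ₆ < 3ℓ₅ < 0` gives `d 6 ≤ d 5`, so `d` is
antitone from `5` on. Hence the affine functions `τ ↦ ℓ_m L + m τ` have increments
`d m · L + τ` in `m` that decrease, the sequence is concave in `m`, and its supremum is taken at
`n + 1` exactly when `τ_n ≤ τ ≤ τ_{n+1}`. On that interval `φ` is the affine map of slope
`n + 1 > 0`, which sends `τ_n ↦ τ_{n+1}` (this is the recursion) and `τ_{n+1} ↦ τ_{n+2}`.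
-/

open Set

theorem le_of_antitone_sub_of_le_of_le {f : ℕ → ℝ} (hf : Antitone fun k => f (k + 1) - f k)
    {p : ℕ} (hp₁ : f p ≤ f (p + 1)) (hp₂ : f (p + 2) ≤ f (p + 1)) (k : ℕ) : f k ≤ f (p + 1) := by
  rcases le_total k (p + 1) with hk | hk
  · refine monotoneOn_of_le_succ ordConnected_Iic (fun i _ _ hi => ?_) hk self_mem_Iic hk
    rw [Order.succ_eq_add_one] at hi ⊢
    have := hf (Nat.le_of_succ_le_succ hi)
    linarith
  · refine antitoneOn_nat_Ici_of_succ_le (fun i hi => ?_) self_mem_Ici hk hk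
    have := hf hi
    linarith

theorem ciSup_eq_of_antitone_sub {f : ℕ → ℝ} (hf : Antitone fun k => f (k + 1) - f k)
    {p : ℕ} (hp₁ : f p ≤ f (p + 1)) (hp₂ : f (p + 2) ≤ f (p + 1)) : ⨆ k, f k = f (p + 1) :=
  ciSup_eq_of_forall_le_of_forall_lt_exists_gt (le_of_antitone_sub_of_le_of_le hf hp₁ hp₂)
    fun _ hw => ⟨p + 1, hw⟩

section Sequence

variable {l : ℕ → ℤ}

theorem sub_sub_sub_eq_mul_of_rec
    (hrec : ∀ n : ℕ, 5 ≤ n → l (n + 2) = ((n : ℤ) + 1) * (l (n + 1) - l n)) {n : ℕ} (hn : 5 ≤ n) :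
    (l (n + 3) - l (n + 2)) - (l (n + 2) - l (n + 1)) =
      ((n : ℤ) + 1) * ((l (n + 2) - l (n + 1)) - (l (n + 1) - l n)) := by
  have h₁ := hrec (n + 1) (by omega)
  push_cast at h₁
  linear_combination h₁ - hrec n hn

theorem antitone_sub_of_rec (h5 : l 5 < 0) (h6 : l 6 < 3 * l 5)
    (hrec : ∀ n : ℕ, 5 ≤ n → l (n + 2) = ((n : ℤ) + 1) * (l (n + 1) - l n)) :
    Antitone fun m => l (m + 6) - l (m + 5) := by
  refine antitone_nat_of_succ_le fun m => ?_
  induction m with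
  | zero => have := hrec 5 le_rfl; norm_num at this ⊢; omega
  | succ m ih =>
    have key := sub_sub_sub_eq_mul_of_rec hrec (n := m + 5) (by omega)
    simp only [add_assoc, Nat.reduceAdd] at key ih ⊢
    push_cast at key
    nlinarith [mul_nonpos_of_nonneg_of_nonpos (by positivity : (0 : ℤ) ≤ m + 6) (sub_nonpos.2 ih)]

end Sequence

section Phi

variable {l : ℕ → ℤ} {L : ℝ}

theorem phi9_eq_of_mem_Icc (hd : Antitone fun m => l (m + 6) - l (m + 5)) (hL : 0 ≤ L) {n : ℕ}
    (hn : 5 ≤ n) {τ : ℝ} (hτ₁ : tau9 l L n ≤ τ) (hτ₂ : τ ≤ tau9 l L (n + 1)) :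
    phi9 l L τ = ((l (n + 1) : ℤ) : ℝ) * L + ((n : ℝ) + 1) * τ := by
  -- `phi9` indexes its terms by `m = k - 5`, so the maximising index `n + 1 = p + 6` is `m = p + 1`.
  obtain ⟨p, rfl⟩ : ∃ p, n = p + 5 := ⟨n - 5, by omega⟩
  set f : ℕ → ℝ := fun m => ((l (m + 5) : ℤ) : ℝ) * L + ((m : ℝ) + 5) * τ
  have hf : ∀ m, f (m + 1) - f m = ((l (m + 6) - l (m + 5) : ℤ) : ℝ) * L + τ := fun m => by
    simp only [f]; push_cast; ring
  have hp₁ : f p ≤ f (p + 1) := by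
    have := hf p
    simp only [tau9] at hτ₁
    push_cast at this hτ₁
    linarith
  have hp₂ : f (p + 2) ≤ f (p + 1) := by
    have := hf (p + 1)
    simp only [tau9] at hτ₂
    push_cast at this hτ₂
    linarith
  have hanti : Antitone fun m => f (m + 1) - f m := fun a b hab => by
    simp only [hf]
    gcongr ?_ * L + τ
    exact_mod_cast hd hab
  calc phi9 l L τ = f (p + 1) := ciSup_eq_of_antitone_sub hanti hp₁ hp₂
    _ = _ := by simp only [f]; push_cast; ring

theorem tau9_le_tau9_succ (hd : Antitone fun m => l (m + 6) - l (m + 5)) (hL : 0 ≤ L) {n : ℕ}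
    (hn : 5 ≤ n) : tau9 l L n ≤ tau9 l L (n + 1) := by
  obtain ⟨p, rfl⟩ : ∃ p, n = p + 5 := ⟨n - 5, by omega⟩
  have h : l (p + 7) - l (p + 6) ≤ l (p + 6) - l (p + 5) := hd p.le_succ
  simp only [tau9, add_assoc, Nat.reduceAdd]
  gcongr ((?_ : ℤ) : ℝ) * L
  omega

theorem line_at_tau9_of_rec
    (hrec : ∀ n : ℕ, 5 ≤ n → l (n + 2) = ((n : ℤ) + 1) * (l (n + 1) - l n)) {n : ℕ} (hn : 5 ≤ n) :
    ((l (n + 1) : ℤ) : ℝ) * L + ((n : ℝ) + 1) * tau9 l L n = tau9 l L (n + 1) := by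
  have h : ((l (n + 2) : ℤ) : ℝ) = ((n : ℝ) + 1) * (l (n + 1) - l n) := by
    exact_mod_cast hrec n hn
  simp only [tau9]
  push_cast
  rw [h]
  ring

theorem line_at_tau9_succ_of_rec
    (hrec : ∀ n : ℕ, 5 ≤ n → l (n + 2) = ((n : ℤ) + 1) * (l (n + 1) - l n)) {n : ℕ} (hn : 5 ≤ n) :
    ((l (n + 1) : ℤ) : ℝ) * L + ((n : ℝ) + 1) * tau9 l L (n + 1) = tau9 l L (n + 2) := by
  have h := line_at_tau9_of_rec (L := L) hrec (n := n + 1) (by omega)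
  simp only [tau9] at h ⊢
  push_cast at h ⊢
  linarith

end Phi

/-- With (ℓ_n)_{n≥5} as in the previous statement and L > 0, for every n ≥ 5
and every τ ∈ [τ_n, τ_{n+1}] (where τ_n = (ℓ_n − ℓ_{n+1})L) the supremum defining φ(τ) is
attained at the index n+1, i.e. φ(τ) = ℓ_{n+1}L + (n+1)τ; moreover φ(τ_n) = τ_{n+1} and
φ maps (τ_n, τ_{n+1}) onto (τ_{n+1}, τ_{n+2}). -/
theorem montel_stmt9 (l : ℕ → ℤ) (h5 : l 5 < 0) (h6 : l 6 < 3 * l 5)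
    (hrec : ∀ n : ℕ, 5 ≤ n → l (n + 2) = ((n : ℤ) + 1) * (l (n + 1) - l n))
    (L : ℝ) (hL : 0 < L) :
    ∀ n : ℕ, 5 ≤ n →
      (∀ τ : ℝ, tau9 l L n ≤ τ → τ ≤ tau9 l L (n + 1) →
        phi9 l L τ = ((l (n + 1) : ℤ) : ℝ) * L + ((n : ℝ) + 1) * τ) ∧
      phi9 l L (tau9 l L n) = tau9 l L (n + 1) ∧
      phi9 l L '' Set.Ioo (tau9 l L n) (tau9 l L (n + 1)) =
        Set.Ioo (tau9 l L (n + 1)) (tau9 l L (n + 2)) := by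
  intro n hn
  have hd := antitone_sub_of_rec h5 h6 hrec
  have hφ : ∀ τ, tau9 l L n ≤ τ → τ ≤ tau9 l L (n + 1) →
      phi9 l L τ = ((l (n + 1) : ℤ) : ℝ) * L + ((n : ℝ) + 1) * τ :=
    fun τ => phi9_eq_of_mem_Icc hd hL.le hn
  refine ⟨hφ, ?_, ?_⟩
  · rw [hφ _ le_rfl (tau9_le_tau9_succ hd hL.le hn), line_at_tau9_of_rec hrec hn]
  · calc phi9 l L '' Ioo (tau9 l L n) (tau9 l L (n + 1))
        = (((n : ℝ) + 1) * · + ((l (n + 1) : ℤ) : ℝ) * L) '' Ioo (tau9 l L n) (tau9 l L (n + 1)) :=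
          EqOn.image_eq fun τ hτ => (hφ τ hτ.1.le hτ.2.le).trans (add_comm _ _)
      _ = Ioo (tau9 l L (n + 1)) (tau9 l L (n + 2)) := by
          rw [image_affine_Ioo (by positivity)]
          congr 1 <;> linarith [line_at_tau9_of_rec (L := L) hrec hn,
            line_at_tau9_succ_of_rec (L := L) hrec hn]
end

section
/- Let k be a complete non-archimedean field and f : k → k a transcendental entire function. Then for every w ∈ k the preimage f⁻¹(w) is unbounded: for every R > 0 there exists z ∈ k with |z| > R and f(z) = w. -/
/-!
Write `termNorm b r j = ‖b j‖ * r ^ j` for the size of the `j`-th term on the circle `‖z‖ = r`.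
For a polynomial `P` over an algebraically closed ultrametric field, the last index at which
`termNorm P.coeff r` is maximal (the central index) is additive under multiplication, so it equals
the number of roots in the closed disc `‖x‖ ≤ r`, and the maximal term is
`‖P.leadingCoeff‖ * ∏ max r ‖x‖` over the roots.

Let `b` be the coefficients of `f - w`. As `b` has infinitely many nonzero coefficients, its central
index grows: there are radii `R < r` with different central indices, so a truncation of the series
has more roots in the disc of radius `r` than in that of radius `R`. This gives a root `α` of a
truncation with `R < ‖α‖ = ρ`. One more term changes the value at `α` only by `termNorm b ρ N`,
which is below the maximal term `M`; the same root count then gives a root `β` of the longer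
truncation with `‖α - β‖ ^ n * M ≤ termNorm b ρ N * ρ ^ n`, `n` the central index at `ρ`. These
roots form a Cauchy sequence on the sphere `‖z‖ = ρ`, and its limit is a zero of `f - w`.
-/

open Polynomial Filter Topology

def IsCentralIndex (f : ℕ → ℝ) (n : ℕ) : Prop :=
  (∀ j, f j ≤ f n) ∧ ∀ j, n < j → f j < f n

def termNorm {E : Type*} [Norm E] (a : ℕ → E) (r : ℝ) (j : ℕ) : ℝ := ‖a j‖ * r ^ j

namespace IsCentralIndex

variable {f g : ℕ → ℝ} {m n : ℕ}

theorem unique (hm : IsCentralIndex f m) (hn : IsCentralIndex f n) : m = n := by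
  by_contra hne
  rcases Nat.lt_or_gt_of_ne hne with h | h
  · exact (hm.2 n h).not_ge (hn.1 m)
  · exact (hn.2 m h).not_ge (hm.1 n)

theorem pos (hf : ∀ j, 0 ≤ f j) (hn : IsCentralIndex f n) : 0 < f n :=
  (hf (n + 1)).trans_lt (hn.2 _ n.lt_succ_self)

theorem mul_lt_mul (hf₀ : ∀ j, 0 ≤ f j) (hg₀ : ∀ j, 0 ≤ g j) (hf : IsCentralIndex f n)
    (hg : IsCentralIndex g m) {i j : ℕ} (hij : n + m ≤ i + j) (hne : (i, j) ≠ (n, m)) :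
    f i * g j < f n * g m := by
  rcases lt_or_ge n i with hi | hi
  · calc f i * g j ≤ f i * g m := mul_le_mul_of_nonneg_left (hg.1 j) (hf₀ i)
      _ < f n * g m := mul_lt_mul_of_pos_right (hf.2 i hi) (hg.pos hg₀)
  · have hj : m < j := by
      by_contra! hj
      exact hne (Prod.ext (by omega) (by omega))
    calc f i * g j ≤ f n * g j := mul_le_mul_of_nonneg_right (hf.1 i) (hg₀ j)
      _ < f n * g m := mul_lt_mul_of_pos_left (hg.2 j hj) (hf.pos hf₀)

end IsCentralIndex

theorem exists_isCentralIndex {f : ℕ → ℝ} (hf : Tendsto f atTop (𝓝 0)) {i : ℕ} (hi : 0 < f i) :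
    ∃ n, IsCentralIndex f n := by
  classical
  obtain ⟨N, hN⟩ := eventually_atTop.mp (hf.eventually_lt_const hi)
  have hiN : i ∈ Finset.range N := Finset.mem_range.mpr (not_le.mp fun h => (hN i h).false)
  obtain ⟨m, -, hm⟩ := (Finset.range N).exists_max_image f ⟨i, hiN⟩
  have hsmall : ∀ j, N ≤ j → f j < f m := fun j hj => (hN j hj).trans_le (hm i hiN)
  have hmax : ∀ j, f j ≤ f m := fun j =>
    if hj : j < N then hm j (Finset.mem_range.mpr hj) else (hsmall j (not_lt.mp hj)).le
  set T := (Finset.range N).filter (fun j => f j = f m)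
  have hT : T.Nonempty := ⟨m, Finset.mem_filter.mpr
    ⟨Finset.mem_range.mpr (not_le.mp fun h => (hsmall m h).false), rfl⟩⟩
  have hnm : f (T.max' hT) = f m := (Finset.mem_filter.mp (T.max'_mem hT)).2
  refine ⟨T.max' hT, fun j => hnm ▸ hmax j, fun j hj => hnm ▸ (hmax j).lt_of_ne fun hjm => ?_⟩
  have hjN : j < N := not_le.mp fun h => (hsmall j h).ne hjm
  exact hj.not_ge (T.le_max' j (Finset.mem_filter.mpr ⟨Finset.mem_range.mpr hjN, hjm⟩))

theorem exists_seq_of_forall_exists {α : Type*} {p : ℕ → α → Prop} {q : ℕ → α → α → Prop}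
    {x₀ : α} (h₀ : p 0 x₀) (h : ∀ i x, p i x → ∃ y, p (i + 1) y ∧ q i x y) :
    ∃ f : ℕ → α, ∀ i, p i (f i) ∧ q i (f i) (f (i + 1)) := by
  have : Nonempty α := ⟨x₀⟩
  choose! g hg using h
  let f : ℕ → α := fun i => Nat.rec x₀ g i
  have hf : ∀ i, p i (f i) := fun i => by
    induction i with
    | zero => exact h₀
    | succ i ih => exact (hg i _ ih).1
  exact ⟨f, fun i => ⟨hf i, (hg i _ (hf i)).2⟩⟩

theorem tendsto_zero_of_tendsto_pow {e : ℕ → ℝ} (he : ∀ i, 0 ≤ e i) {n : ℕ} (hn : n ≠ 0)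
    (h : Tendsto (fun i => e i ^ n) atTop (𝓝 0)) : Tendsto e atTop (𝓝 0) := by
  have := h.rpow_const (p := (n : ℝ)⁻¹) (Or.inr (by positivity))
  simpa [Real.pow_rpow_inv_natCast (he _) hn, Real.zero_rpow (by positivity : (n : ℝ)⁻¹ ≠ 0)]
    using this

theorem IsUltrametricDist.norm_add_eq_left {E : Type*} [SeminormedAddGroup E]
    [IsUltrametricDist E] {x y : E} (h : ‖y‖ < ‖x‖) : ‖x + y‖ = ‖x‖ := by
  rw [norm_add_eq_max_of_norm_ne_norm h.ne', max_eq_left h.le]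

section NormedField

variable {k : Type*} [NormedField k]

theorem termNorm_nonneg (a : ℕ → k) {r : ℝ} (hr : 0 ≤ r) (j : ℕ) : 0 ≤ termNorm a r j := by
  unfold termNorm; positivity

theorem termNorm_pos {a : ℕ → k} {r : ℝ} (hr : 0 < r) {j : ℕ} (hj : a j ≠ 0) :
    0 < termNorm a r j := by
  unfold termNorm; positivity

theorem norm_mul_mul_pow_add (x y : k) (r : ℝ) (i j : ℕ) :
    ‖x * y‖ * r ^ (i + j) = (‖x‖ * r ^ i) * (‖y‖ * r ^ j) := by
  rw [norm_mul, pow_add]; ring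

theorem termNorm_eq_mul_div_pow (a : ℕ → k) {ρ : ℝ} (hρ : ρ ≠ 0) (r : ℝ) (i : ℕ) :
    termNorm a r i = termNorm a ρ i * (r / ρ) ^ i := by
  rw [termNorm, termNorm, div_pow, mul_assoc, mul_div_cancel₀ _ (pow_ne_zero i hρ)]

theorem termNorm_le_termNorm_of_radius_le {a : ℕ → k} {ρ r : ℝ} (hρ : 0 < ρ) (hρr : ρ ≤ r)
    {i j : ℕ} (hij : i ≤ j) (h : termNorm a ρ i ≤ termNorm a ρ j) :
    termNorm a r i ≤ termNorm a r j := by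
  have ht : 1 ≤ r / ρ := (one_le_div hρ).mpr hρr
  have hj := termNorm_nonneg a hρ.le j
  rw [termNorm_eq_mul_div_pow a hρ.ne', termNorm_eq_mul_div_pow a hρ.ne' r j]
  calc termNorm a ρ i * (r / ρ) ^ i ≤ termNorm a ρ j * (r / ρ) ^ i := by gcongr
    _ ≤ termNorm a ρ j * (r / ρ) ^ j := by gcongr

theorem IsCentralIndex.le_of_radius_le {a : ℕ → k} {ρ r : ℝ} (hρ : 0 < ρ) (hρr : ρ ≤ r)
    {m n : ℕ} (hm : IsCentralIndex (termNorm a ρ) m) (hn : IsCentralIndex (termNorm a r) n) :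
    m ≤ n := by
  by_contra! h
  exact (hn.2 m h).not_ge (termNorm_le_termNorm_of_radius_le hρ hρr h.le (hm.1 n))

theorem exists_isCentralIndex_gt {b : ℕ → k}
    (hb : ∀ r, 0 < r → Tendsto (termNorm b r) atTop (𝓝 0)) {R : ℝ} (hR : 0 < R) {n₀ : ℕ}
    (hn₀ : IsCentralIndex (termNorm b R) n₀) {q : ℕ} (hq : n₀ < q) (hbq : b q ≠ 0) :
    ∃ r, R < r ∧ ∃ n, n₀ < n ∧ IsCentralIndex (termNorm b r) n := by
  have hgrow : Tendsto (fun r : ℝ => ‖b q‖ * r ^ (q - n₀)) atTop atTop :=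
    (tendsto_pow_atTop (by omega)).const_mul_atTop (norm_pos_iff.mpr hbq)
  obtain ⟨r, hbr, hRr⟩ := ((hgrow.eventually_gt_atTop ‖b n₀‖).and (eventually_gt_atTop R)).exists
  have hr : 0 < r := hR.trans hRr
  have hqr : termNorm b r n₀ < termNorm b r q := by
    calc termNorm b r n₀ < ‖b q‖ * r ^ (q - n₀) * r ^ n₀ :=
          mul_lt_mul_of_pos_right hbr (pow_pos hr _)
      _ = termNorm b r q := by rw [termNorm, mul_assoc, ← pow_add, Nat.sub_add_cancel hq.le]
  obtain ⟨n, hn⟩ := exists_isCentralIndex (hb r hr) (termNorm_pos hr hbq)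
  refine ⟨r, hRr, n, not_le.mp fun hnn₀ => ?_, hn⟩
  exact ((termNorm_le_termNorm_of_radius_le hR hRr.le hnn₀ (hn₀.1 n)).trans_lt hqr).not_ge
    (hn.1 q)

namespace Polynomial

theorem isCentralIndex_C {c : k} (hc : c ≠ 0) (r : ℝ) :
    IsCentralIndex (termNorm (C c).coeff r) 0 ∧ termNorm (C c).coeff r 0 = ‖c‖ := by
  have hcoeff : ∀ j, termNorm (C c).coeff r (j + 1) = 0 := by simp [termNorm]
  have h0 : termNorm (C c).coeff r 0 = ‖c‖ := by simp [termNorm]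
  refine ⟨⟨?_, ?_⟩, h0⟩
  · rintro (_ | j)
    · exact le_rfl
    · rw [hcoeff, h0]; positivity
  · rintro (_ | j) hj
    · omega
    · rw [hcoeff, h0]; positivity

theorem isCentralIndex_X_sub_C {r : ℝ} (hr : 0 < r) (x : k) :
    IsCentralIndex (termNorm (X - C x).coeff r) (if ‖x‖ ≤ r then 1 else 0) ∧
      termNorm (X - C x).coeff r (if ‖x‖ ≤ r then 1 else 0) = max r ‖x‖ := by
  have h0 : termNorm (X - C x).coeff r 0 = ‖x‖ := by simp [termNorm, coeff_X]
  have h1 : termNorm (X - C x).coeff r 1 = r := by simp [termNorm, coeff_X]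
  have h2 : ∀ j, termNorm (X - C x).coeff r (j + 2) = 0 := by simp [termNorm, coeff_X]
  split_ifs with hx
  · refine ⟨⟨?_, ?_⟩, by rw [h1, max_eq_left hx]⟩
    · rintro (_ | _ | j) <;> simp only [h0, h1, h2, hx, le_refl, hr.le]
    · rintro (_ | _ | j) hj <;> simp only [h2, h1, hr] <;> omega
  · have hx : r < ‖x‖ := not_le.mp hx
    have hxpos : 0 < ‖x‖ := hr.trans hx
    refine ⟨⟨?_, ?_⟩, by rw [h0, max_eq_right hx.le]⟩
    · rintro (_ | _ | j) <;> simp only [h0, h1, h2, hx.le, le_refl, hxpos.le]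
    · rintro (_ | _ | j) hj <;> simp only [h0, h1, h2, hx, hxpos]; omega

theorem norm_eval_eq_prod_roots [IsAlgClosed k] (P : k[X]) (α : k) :
    ‖P.eval α‖ = ‖P.leadingCoeff‖ * (P.roots.map (‖α - ·‖)).prod := by
  rw [(IsAlgClosed.splits P).eval_eq_prod_roots, norm_mul]
  exact congrArg _ (Multiset.prod_hom' P.roots (normHom : k →*₀ ℝ) (α - ·)).symm

end Polynomial

open PowerSeries

theorem termNorm_coeff_trunc (b : ℕ → k) (N : ℕ) (r : ℝ) (j : ℕ) :
    termNorm (trunc N (mk b)).coeff r j = if j < N then termNorm b r j else 0 := by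
  rw [termNorm, coeff_trunc, coeff_mk]
  split_ifs <;> simp [termNorm]

theorem termNorm_coeff_trunc_le (b : ℕ → k) (N : ℕ) {r : ℝ} (hr : 0 ≤ r) (j : ℕ) :
    termNorm (trunc N (mk b)).coeff r j ≤ termNorm b r j := by
  rw [termNorm_coeff_trunc]
  split_ifs
  exacts [le_rfl, termNorm_nonneg b hr j]

theorem IsCentralIndex.trunc {b : ℕ → k} {r : ℝ} (hr : 0 ≤ r) {n N : ℕ}
    (hn : IsCentralIndex (termNorm b r) n) (hN : n < N) :
    IsCentralIndex (termNorm (trunc N (mk b)).coeff r) n := by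
  have hpos := hn.pos (termNorm_nonneg b hr)
  simp only [IsCentralIndex, termNorm_coeff_trunc, hN, if_true]
  refine ⟨fun j => ?_, fun j hj => ?_⟩ <;> split_ifs
  exacts [hn.1 j, hpos.le, hn.2 j hj, hpos]

theorem eval_trunc_mk (b : ℕ → k) (N : ℕ) (z : k) :
    (trunc N (mk b)).eval z = ∑ j ∈ Finset.range N, b j * z ^ j := by
  simp [Polynomial.eval, eval₂_trunc_eq_sum_range]

end NormedField

section Ultrametric

variable {k : Type*} [NormedField k] [IsUltrametricDist k]

namespace Polynomial

open Finset.HasAntidiagonal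

theorem exists_termNorm_coeff_mul_le (P Q : k[X]) {r : ℝ} (hr : 0 ≤ r) (l : ℕ) :
    ∃ i j, i + j = l ∧
      termNorm (P * Q).coeff r l ≤ termNorm P.coeff r i * termNorm Q.coeff r j := by
  obtain ⟨⟨i, j⟩, hij, hle⟩ := IsUltrametricDist.exists_norm_finsetSum_le_of_nonempty
    (t := antidiagonal l) ⟨(l, 0), by simp⟩ (fun x : ℕ × ℕ => P.coeff x.1 * Q.coeff x.2)
  rw [mem_antidiagonal] at hij
  refine ⟨i, j, hij, ?_⟩
  rw [termNorm, termNorm, termNorm, ← norm_mul_mul_pow_add, hij, coeff_mul]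
  gcongr

theorem isCentralIndex_mul {P Q : k[X]} {r : ℝ} (hr : 0 < r) {n m : ℕ}
    (hP : IsCentralIndex (termNorm P.coeff r) n) (hQ : IsCentralIndex (termNorm Q.coeff r) m) :
    IsCentralIndex (termNorm (P * Q).coeff r) (n + m) ∧
      termNorm (P * Q).coeff r (n + m) = termNorm P.coeff r n * termNorm Q.coeff r m := by
  have hP₀ := termNorm_nonneg P.coeff hr.le
  have hQ₀ := termNorm_nonneg Q.coeff hr.le
  have hcentral :
      termNorm (P * Q).coeff r (n + m) = termNorm P.coeff r n * termNorm Q.coeff r m := by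
    have hmem : (n, m) ∈ antidiagonal (n + m) := mem_antidiagonal.mpr rfl
    set rest := ∑ x ∈ (antidiagonal (n + m)).erase (n, m), P.coeff x.1 * Q.coeff x.2
    have hrest : ‖rest‖ * r ^ (n + m) < termNorm P.coeff r n * termNorm Q.coeff r m := by
      obtain ⟨⟨i, j⟩, hmem', hle⟩ := IsUltrametricDist.exists_norm_finsetSum_le
        ((antidiagonal (n + m)).erase (n, m)) (fun x : ℕ × ℕ => P.coeff x.1 * Q.coeff x.2)
      rcases ((antidiagonal (n + m)).erase (n, m)).eq_empty_or_nonempty with he | hne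
      · simp only [rest, he, Finset.sum_empty, norm_zero, zero_mul]
        exact mul_pos (hP.pos hP₀) (hQ.pos hQ₀)
      obtain ⟨hij, hij'⟩ := Finset.mem_erase.mp (hmem' hne)
      rw [mem_antidiagonal] at hij'
      calc _ ≤ ‖P.coeff i * Q.coeff j‖ * r ^ (n + m) := by gcongr
        _ < _ := by
          rw [← hij', norm_mul_mul_pow_add]; exact hP.mul_lt_mul hP₀ hQ₀ hQ hij'.ge hij
    rw [termNorm, coeff_mul, ← Finset.add_sum_erase _ _ hmem, IsUltrametricDist.norm_add_eq_left,
      norm_mul_mul_pow_add]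
    · rfl
    · rwa [← mul_lt_mul_iff_left₀ (pow_pos hr (n + m)), norm_mul_mul_pow_add]
  refine ⟨⟨fun l => ?_, fun l hl => ?_⟩, hcentral⟩ <;> rw [hcentral] <;>
    obtain ⟨i, j, rfl, hij⟩ := exists_termNorm_coeff_mul_le P Q hr.le l
  · exact hij.trans (mul_le_mul (hP.1 i) (hQ.1 j) (hQ₀ j) (hP₀ n))
  · exact hij.trans_lt (hP.mul_lt_mul hP₀ hQ₀ hQ hl.le fun h => by simp_all)

theorem isCentralIndex_C_mul_prod_X_sub_C {r : ℝ} (hr : 0 < r) {c : k} (hc : c ≠ 0)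
    (s : Multiset k) :
    IsCentralIndex (termNorm (C c * (s.map (X - C ·)).prod).coeff r) (s.filter (‖·‖ ≤ r)).card ∧
      termNorm (C c * (s.map (X - C ·)).prod).coeff r (s.filter (‖·‖ ≤ r)).card =
        ‖c‖ * (s.map (max r ‖·‖)).prod := by
  induction s using Multiset.induction_on with
  | empty => simpa using isCentralIndex_C hc r
  | cons x s ih =>
    have hcard : (if ‖x‖ ≤ r then 1 else 0) + (s.filter (‖·‖ ≤ r)).card =
        ((x ::ₘ s).filter (‖·‖ ≤ r)).card := by
      rw [Multiset.filter_cons]; split_ifs <;> simp [add_comm]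
    obtain ⟨hx, hxval⟩ := isCentralIndex_X_sub_C hr x
    obtain ⟨hmul, hval⟩ := isCentralIndex_mul hr hx ih.1
    rw [Multiset.map_cons, Multiset.prod_cons, mul_left_comm, ← hcard]
    refine ⟨hmul, ?_⟩
    rw [hval, hxval, ih.2, Multiset.map_cons, Multiset.prod_cons]
    ring

variable [IsAlgClosed k]

theorem isCentralIndex_card_roots {P : k[X]} (hP : P ≠ 0) {r : ℝ} (hr : 0 < r) :
    IsCentralIndex (termNorm P.coeff r) (P.roots.filter (‖·‖ ≤ r)).card ∧
      termNorm P.coeff r (P.roots.filter (‖·‖ ≤ r)).card =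
        ‖P.leadingCoeff‖ * (P.roots.map (max r ‖·‖)).prod := by
  have h := isCentralIndex_C_mul_prod_X_sub_C hr (leadingCoeff_ne_zero.mpr hP) P.roots
  rwa [← (IsAlgClosed.splits P).eq_prod_roots] at h

theorem eq_card_roots_of_isCentralIndex {P : k[X]} {r : ℝ} (hr : 0 < r) {n : ℕ}
    (hn : IsCentralIndex (termNorm P.coeff r) n) :
    n = (P.roots.filter (‖·‖ ≤ r)).card ∧
      termNorm P.coeff r n = ‖P.leadingCoeff‖ * (P.roots.map (max r ‖·‖)).prod := by
  have hP : P ≠ 0 := by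
    rintro rfl
    simpa [termNorm] using hn.pos (termNorm_nonneg _ hr.le)
  obtain ⟨hcard, hval⟩ := isCentralIndex_card_roots hP hr
  obtain rfl := hn.unique hcard
  exact ⟨rfl, hval⟩

theorem exists_isRoot_norm_mem_Ioc {P : k[X]} {R r : ℝ} (hR : 0 < R) (hr : 0 < r) {m n : ℕ}
    (hm : IsCentralIndex (termNorm P.coeff R) m) (hn : IsCentralIndex (termNorm P.coeff r) n)
    (hmn : m < n) : ∃ x, P.IsRoot x ∧ R < ‖x‖ ∧ ‖x‖ ≤ r := by
  classical
  by_contra! h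
  obtain ⟨rfl, -⟩ := eq_card_roots_of_isCentralIndex hR hm
  obtain ⟨rfl, -⟩ := eq_card_roots_of_isCentralIndex hr hn
  have hP : P ≠ 0 := fun hP => by simp [hP] at hmn
  have hfilter : P.roots.filter (‖·‖ ≤ r) = P.roots.filter (fun x => ‖x‖ ≤ r ∧ ‖x‖ ≤ R) :=
    Multiset.filter_congr fun x hx => ⟨fun hxr => ⟨hxr, not_lt.mp fun hRx =>
      (h x ((mem_roots hP).mp hx) hRx).not_ge hxr⟩, And.left⟩
  refine hmn.not_ge ?_
  rw [hfilter]
  exact Multiset.card_le_card (Multiset.monotone_filter_right _ fun _ => And.right)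

theorem pos_of_isCentralIndex_of_isRoot {P : k[X]} {r : ℝ} (hr : 0 < r) {n : ℕ}
    (hn : IsCentralIndex (termNorm P.coeff r) n) {α : k} (hα : P.IsRoot α) (hαr : ‖α‖ ≤ r) :
    0 < n := by
  obtain ⟨rfl, -⟩ := eq_card_roots_of_isCentralIndex hr hn
  have hP : P ≠ 0 := by
    rintro rfl
    simpa [termNorm] using hn.pos (termNorm_nonneg _ hr.le)
  exact Multiset.card_pos_iff_exists_mem.mpr
    ⟨α, Multiset.mem_filter.mpr ⟨(mem_roots hP).mpr hα, hαr⟩⟩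

theorem pow_mul_termNorm_le_norm_eval {P : k[X]} {ρ : ℝ} (hρ : 0 < ρ) {n : ℕ}
    (hn : IsCentralIndex (termNorm P.coeff ρ) n) {α : k} (hα : ‖α‖ = ρ) {δ : ℝ} (hδ : 0 ≤ δ)
    (hδα : ∀ x ∈ P.roots, δ ≤ ‖α - x‖) :
    δ ^ n * termNorm P.coeff ρ n ≤ ‖P.eval α‖ * ρ ^ n := by
  classical
  obtain ⟨rfl, hval⟩ := eq_card_roots_of_isCentralIndex hρ hn
  rw [hval, norm_eval_eq_prod_roots]
  set u := P.roots.filter (‖·‖ ≤ ρ)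
  set v := P.roots.filter (fun x => ¬ ‖x‖ ≤ ρ)
  have hv : ∀ x ∈ v, ρ < ‖x‖ := fun x hx => not_le.mp (Multiset.mem_filter.mp hx).2
  have hu_max : (u.map (max ρ ‖·‖)).prod = ρ ^ u.card := by
    rw [Multiset.map_congr rfl fun x hx => max_eq_left (Multiset.mem_filter.mp hx).2,
      Multiset.map_const', Multiset.prod_replicate]
  have hv_max : (v.map (max ρ ‖·‖)).prod = (v.map (‖·‖)).prod :=
    congrArg _ (Multiset.map_congr rfl fun x hx => max_eq_right (hv x hx).le)
  have hv_dist : (v.map (‖α - ·‖)).prod = (v.map (‖·‖)).prod :=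
    congrArg _ (Multiset.map_congr rfl fun x hx => by
      rw [← norm_neg, neg_sub, sub_eq_add_neg, IsUltrametricDist.norm_add_eq_left
        (by rw [norm_neg, hα]; exact hv x hx)])
  have hu_dist : δ ^ u.card ≤ (u.map (‖α - ·‖)).prod := by
    simpa [Multiset.map_const', Multiset.prod_replicate] using
      Multiset.prod_map_le_prod_map₀ (fun _ => δ) (‖α - ·‖) (fun _ _ => hδ)
        fun x hx => hδα x (Multiset.mem_of_mem_filter hx)
  have hV : 0 ≤ (v.map (‖·‖)).prod := Multiset.prod_nonneg fun _ hx => by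
    obtain ⟨x, -, rfl⟩ := Multiset.mem_map.mp hx; exact norm_nonneg x
  rw [← Multiset.filter_add_not (‖·‖ ≤ ρ) P.roots, Multiset.map_add, Multiset.map_add,
    Multiset.prod_add, Multiset.prod_add, hu_max, hv_max, hv_dist]
  calc δ ^ u.card * (‖P.leadingCoeff‖ * (ρ ^ u.card * (v.map (‖·‖)).prod))
      = ‖P.leadingCoeff‖ * (v.map (‖·‖)).prod * ρ ^ u.card * δ ^ u.card := by ring
    _ ≤ ‖P.leadingCoeff‖ * (v.map (‖·‖)).prod * ρ ^ u.card * (u.map (‖α - ·‖)).prod := by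
      gcongr
    _ = _ := by ring

theorem exists_isRoot_near {P : k[X]} {ρ : ℝ} (hρ : 0 < ρ) {n : ℕ}
    (hn : IsCentralIndex (termNorm P.coeff ρ) n) {α : k} (hα : ‖α‖ = ρ)
    (hev : ‖P.eval α‖ < termNorm P.coeff ρ n) :
    ∃ β, P.IsRoot β ∧ ‖β‖ = ρ ∧ ‖α - β‖ ^ n * termNorm P.coeff ρ n ≤ ‖P.eval α‖ * ρ ^ n := by
  have hP : P ≠ 0 := by
    rintro rfl
    simp [termNorm] at hev
  have hρn : 0 < ρ ^ n := pow_pos hρ n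
  rcases eq_or_ne P.roots 0 with h0 | h0
  · have h := pow_mul_termNorm_le_norm_eval hρ hn hα hρ.le (by simp [h0])
    rw [mul_comm] at h
    exact absurd (le_of_mul_le_mul_right h hρn) hev.not_ge
  obtain ⟨β, hβ, hmin⟩ := Multiset.exists_min_image (fun x : k => ‖α - x‖) h0
  have key := pow_mul_termNorm_le_norm_eval hρ hn hα (norm_nonneg _) hmin
  have hδ : ‖α - β‖ < ρ := by
    refine lt_of_pow_lt_pow_left₀ n hρ.le
      (lt_of_mul_lt_mul_right ?_ (termNorm_nonneg P.coeff hρ.le n))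
    calc ‖α - β‖ ^ n * termNorm P.coeff ρ n ≤ ‖P.eval α‖ * ρ ^ n := key
      _ < termNorm P.coeff ρ n * ρ ^ n := mul_lt_mul_of_pos_right hev hρn
      _ = ρ ^ n * termNorm P.coeff ρ n := mul_comm _ _
  refine ⟨β, (mem_roots hP).mp hβ, ?_, key⟩
  calc ‖β‖ = ‖α + -(α - β)‖ := by rw [neg_sub, add_sub_cancel]
    _ = ρ := by rw [IsUltrametricDist.norm_add_eq_left (by rwa [norm_neg, hα]), hα]

end Polynomial

theorem norm_pow_sub_pow_mul_le {x y : k} {ρ : ℝ} (hx : ‖x‖ ≤ ρ) (hy : ‖y‖ ≤ ρ) (i : ℕ) :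
    ‖x ^ i - y ^ i‖ * ρ ≤ ‖x - y‖ * ρ ^ i := by
  have hρ : 0 ≤ ρ := (norm_nonneg x).trans hx
  induction i with
  | zero => simp
  | succ i ih =>
    have hsplit : x ^ (i + 1) - y ^ (i + 1) = x * (x ^ i - y ^ i) + (x - y) * y ^ i := by ring
    rw [hsplit]
    refine (mul_le_mul_of_nonneg_right (IsUltrametricDist.norm_add_le_max _ _) hρ).trans ?_
    rw [max_mul_of_nonneg _ _ hρ, norm_mul, norm_mul, norm_pow]
    refine max_le ?_ ?_
    · calc ‖x‖ * ‖x ^ i - y ^ i‖ * ρ = ‖x‖ * (‖x ^ i - y ^ i‖ * ρ) := by ring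
        _ ≤ ρ * (‖x - y‖ * ρ ^ i) := by gcongr
        _ = ‖x - y‖ * ρ ^ (i + 1) := by ring
    · calc ‖x - y‖ * ‖y‖ ^ i * ρ ≤ ‖x - y‖ * ρ ^ i * ρ := by gcongr
        _ = ‖x - y‖ * ρ ^ (i + 1) := by ring

theorem Polynomial.norm_eval_sub_eval_le (P : k[X]) {ρ M : ℝ} (hρ : 0 < ρ)
    (hM : ∀ j, termNorm P.coeff ρ j ≤ M) {x y : k} (hx : ‖x‖ ≤ ρ) (hy : ‖y‖ ≤ ρ) :
    ‖P.eval x - P.eval y‖ ≤ ‖x - y‖ * M / ρ := by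
  have hM0 : 0 ≤ M := (termNorm_nonneg _ hρ.le 0).trans (hM 0)
  rw [eval_eq_sum_range, eval_eq_sum_range, ← Finset.sum_sub_distrib]
  refine IsUltrametricDist.norm_sum_le_of_forall_le_of_nonneg (by positivity) fun j _ => ?_
  rw [← mul_sub, le_div_iff₀ hρ, norm_mul, mul_assoc]
  calc ‖P.coeff j‖ * (‖x ^ j - y ^ j‖ * ρ) ≤ ‖P.coeff j‖ * (‖x - y‖ * ρ ^ j) :=
        mul_le_mul_of_nonneg_left (norm_pow_sub_pow_mul_le hx hy j) (norm_nonneg _)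
    _ = ‖x - y‖ * termNorm P.coeff ρ j := by rw [termNorm]; ring
    _ ≤ ‖x - y‖ * M := by gcongr; exact hM j

theorem summable_mul_pow_of_tendsto_termNorm [CompleteSpace k] {b : ℕ → k} {z : k}
    (hb : Tendsto (termNorm b ‖z‖) atTop (𝓝 0)) : Summable fun j => b j * z ^ j := by
  refine NonarchimedeanAddGroup.summable_of_tendsto_cofinite_zero ?_
  rw [Nat.cofinite_eq_atTop, tendsto_zero_iff_norm_tendsto_zero]
  exact hb.congr fun j => by rw [termNorm, norm_mul, norm_pow]

open PowerSeries

theorem exists_isRoot_trunc_succ_near [IsAlgClosed k] {b : ℕ → k} {ρ : ℝ} (hρ : 0 < ρ)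
    {n N : ℕ} (hn : IsCentralIndex (termNorm b ρ) n) (hN : n < N) {α : k}
    (hα : (trunc N (mk b)).IsRoot α) (hαρ : ‖α‖ = ρ) :
    ∃ β, (trunc (N + 1) (mk b)).IsRoot β ∧ ‖β‖ = ρ ∧
      ‖α - β‖ ^ n * termNorm b ρ n ≤ termNorm b ρ N * ρ ^ n := by
  have hev : ‖(trunc (N + 1) (mk b)).eval α‖ = termNorm b ρ N := by
    rw [trunc_succ, eval_add, hα.eq_zero, zero_add, eval_monomial, coeff_mk, norm_mul, norm_pow,
      hαρ, termNorm]
  have hval : termNorm (trunc (N + 1) (mk b)).coeff ρ n = termNorm b ρ n := by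
    rw [termNorm_coeff_trunc, if_pos (by omega)]
  obtain ⟨β, hβ, hβρ, hβα⟩ := Polynomial.exists_isRoot_near hρ
    (hn.trunc hρ.le (N := N + 1) (by omega)) hαρ (by rw [hev, hval]; exact hn.2 N hN)
  exact ⟨β, hβ, hβρ, by rwa [hev, hval] at hβα⟩

variable [CompleteSpace k]

theorem exists_tendsto_isRoot_trunc [IsAlgClosed k] {b : ℕ → k} {ρ : ℝ} (hρ : 0 < ρ)
    (hb : Tendsto (termNorm b ρ) atTop (𝓝 0)) {n N : ℕ} (hn : IsCentralIndex (termNorm b ρ) n)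
    (hN : n < N) {α₀ : k} (hα₀ : (trunc N (mk b)).IsRoot α₀) (hα₀ρ : ‖α₀‖ = ρ) :
    ∃ α : ℕ → k, ∃ z, Tendsto α atTop (𝓝 z) ∧
      ∀ i, (trunc (N + i) (mk b)).IsRoot (α i) ∧ ‖α i‖ = ρ := by
  set M := termNorm b ρ n
  have hM : 0 < M := hn.pos (termNorm_nonneg b hρ.le)
  have hn0 : n ≠ 0 :=
    (Polynomial.pos_of_isCentralIndex_of_isRoot hρ (hn.trunc hρ.le hN) hα₀ hα₀ρ.le).ne'
  obtain ⟨α, hα⟩ := exists_seq_of_forall_exists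
    (p := fun i x => (trunc (N + i) (mk b)).IsRoot x ∧ ‖x‖ = ρ)
    (q := fun i x y => ‖x - y‖ ^ n * M ≤ termNorm b ρ (N + i) * ρ ^ n) ⟨hα₀, hα₀ρ⟩
    fun i x hx => (exists_isRoot_trunc_succ_near hρ hn (by omega) hx.1 hx.2).imp
      fun _ h => ⟨⟨h.1, h.2.1⟩, h.2.2⟩
  have hstep : Tendsto (fun i => α (i + 1) - α i) atTop (𝓝 0) := by
    refine tendsto_zero_iff_norm_tendsto_zero.mpr
      (tendsto_zero_of_tendsto_pow (fun _ => norm_nonneg _) hn0 ?_)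
    have hbound : Tendsto (fun i => termNorm b ρ (N + i) * ρ ^ n / M) atTop (𝓝 0) := by
      simpa using ((hb.comp (tendsto_atTop_mono (Nat.le_add_left · N) tendsto_id)).mul_const
        (ρ ^ n)).div_const M
    refine squeeze_zero (fun _ => by positivity) (fun i => ?_) hbound
    rw [le_div_iff₀ hM, norm_sub_rev]
    exact (hα i).2
  obtain ⟨z, hz⟩ := cauchySeq_tendsto_of_complete
    (NonarchimedeanAddGroup.cauchySeq_of_tendsto_sub_nhds_zero hstep)
  exact ⟨α, z, hz, fun i => (hα i).1⟩

theorem tsum_eq_zero_of_tendsto_isRoot_trunc {b : ℕ → k} {ρ M : ℝ} (hρ : 0 < ρ)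
    (hb : Tendsto (termNorm b ρ) atTop (𝓝 0)) (hM : ∀ j, termNorm b ρ j ≤ M) {N : ℕ}
    {α : ℕ → k} {z : k} (hz : Tendsto α atTop (𝓝 z))
    (hα : ∀ i, (trunc (N + i) (mk b)).IsRoot (α i) ∧ ‖α i‖ = ρ) :
    ‖z‖ = ρ ∧ ∑' j, b j * z ^ j = 0 := by
  have hzρ : ‖z‖ = ρ :=
    tendsto_nhds_unique hz.norm (tendsto_const_nhds.congr fun i => (hα i).2.symm)
  -- the partial sum at `z` is within `‖α i - z‖ * M / ρ` of its value `0` at `α i`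
  have hpartial : Tendsto (fun i => (trunc (N + i) (mk b)).eval z) atTop (𝓝 0) := by
    have hdist : Tendsto (fun i => ‖α i - z‖ * M / ρ) atTop (𝓝 0) := by
      simpa using ((tendsto_iff_norm_sub_tendsto_zero.mp hz).mul_const M).div_const ρ
    refine squeeze_zero_norm (fun i => ?_) hdist
    have h := Polynomial.norm_eval_sub_eval_le (trunc (N + i) (mk b)) hρ
      (fun j => (termNorm_coeff_trunc_le b _ hρ.le j).trans (hM j)) hzρ.le (hα i).2.le
    rwa [(hα i).1.eq_zero, sub_zero, norm_sub_rev z] at h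
  refine ⟨hzρ, tendsto_nhds_unique ?_ hpartial⟩
  simpa only [eval_trunc_mk, Function.comp_def] using
    (summable_mul_pow_of_tendsto_termNorm (hzρ ▸ hb)).hasSum.tendsto_sum_nat.comp
      (tendsto_atTop_mono (Nat.le_add_left · N) tendsto_id)

theorem exists_norm_gt_tsum_eq_zero [IsAlgClosed k] {b : ℕ → k}
    (hb : ∀ r, 0 < r → Tendsto (termNorm b r) atTop (𝓝 0)) (hinf : ∀ N, ∃ j, N ≤ j ∧ b j ≠ 0)
    {R : ℝ} (hR : 0 < R) : ∃ z, R < ‖z‖ ∧ ∑' j, b j * z ^ j = 0 := by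
  obtain ⟨i, -, hi⟩ := hinf 0
  obtain ⟨n₀, hn₀⟩ := exists_isCentralIndex (hb R hR) (termNorm_pos hR hi)
  obtain ⟨q, hq, hbq⟩ := hinf (n₀ + 1)
  obtain ⟨r, hRr, n₁, hn₀₁, hn₁⟩ := exists_isCentralIndex_gt hb hR hn₀ hq hbq
  have hr : 0 < r := hR.trans hRr
  obtain ⟨α₀, hα₀, hRα₀, hα₀r⟩ := Polynomial.exists_isRoot_norm_mem_Ioc hR hr
    (hn₀.trunc hR.le (N := n₁ + 1) (by omega)) (hn₁.trunc hr.le (by omega)) hn₀₁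
  have hρ : 0 < ‖α₀‖ := hR.trans hRα₀
  obtain ⟨n, hn⟩ := exists_isCentralIndex (hb _ hρ) (termNorm_pos hρ hi)
  obtain ⟨α, z, hz, hα⟩ := exists_tendsto_isRoot_trunc hρ (hb _ hρ) hn
    (Nat.lt_succ_of_le (hn.le_of_radius_le hρ hα₀r hn₁)) hα₀ rfl
  obtain ⟨hzρ, hz0⟩ := tsum_eq_zero_of_tendsto_isRoot_trunc hρ (hb _ hρ) hn.1 hz hα
  exact ⟨z, hzρ ▸ hRα₀, hz0⟩

end Ultrametric

/-- Let k be an algebraically closed complete non-archimedean field and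
f(z) = Σ_j a_j z^j a transcendental entire function (everywhere convergent power series with
infinitely many nonzero coefficients).  Then for every w ∈ k the preimage f⁻¹(w) is
unbounded: for every R > 0 there is z with |z| > R and f(z) = w. -/
theorem montel_stmt12 {k : Type*} [NontriviallyNormedField k] [CompleteSpace k]
    [IsAlgClosed k] [IsUltrametricDist k] (a : ℕ → k)
    (hentire : ∀ r : ℝ, 0 < r →
      Filter.Tendsto (fun j : ℕ => ‖a j‖ * r ^ j) Filter.atTop (nhds 0))
    (htrans : ∀ N : ℕ, ∃ j : ℕ, N ≤ j ∧ a j ≠ 0) :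
    ∀ w : k, ∀ R : ℝ, 0 < R → ∃ z : k, R < ‖z‖ ∧ (∑' j : ℕ, a j * z ^ j) = w := by
  intro w R hR
  set b := Function.update a 0 (a 0 - w)
  have hba : ∀ j, j ≠ 0 → b j = a j := fun j hj => Function.update_of_ne hj _ _
  have hb : ∀ r, 0 < r → Tendsto (termNorm b r) atTop (𝓝 0) := fun r hr =>
    (hentire r hr).congr' <| (eventually_ne_atTop 0).mono fun j hj => by rw [termNorm, hba j hj]
  have hinf : ∀ N, ∃ j, N ≤ j ∧ b j ≠ 0 := fun N => by
    obtain ⟨j, hj, hj0⟩ := htrans (N + 1)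
    exact ⟨j, by omega, hba j (by omega) ▸ hj0⟩
  obtain ⟨z, hRz, hz⟩ := exists_norm_gt_tsum_eq_zero hb hinf hR
  have hsplit : (fun j => a j * z ^ j) = fun j => b j * z ^ j + if j = 0 then w else 0 := by
    funext j
    rcases eq_or_ne j 0 with rfl | hj
    · simp [b]
    · simp [hba j hj, hj]
  refine ⟨z, hRz, ?_⟩
  rw [hsplit, (summable_mul_pow_of_tendsto_termNorm (hb _ (hR.trans hRz))).tsum_add
    (hasSum_ite_eq 0 w).summable, hz, zero_add, tsum_ite_eq]
end

section
/- Let c ∈ k with |c| ≥ 4 > 1 in an algebraically closed complete non-archimedean field of residue characteristic ≠ 2, and let P_c(z) = z² + c. Then the filled Julia set K_c = {z ∈ k : (|P_c^n(z)|)_n is bounded} is non-empty, compact in k, totally invariant (P_c⁻¹(K_c) = K_c = P_c(K_c)), and P_c restricted to K_c is topologically conjugate to the left shift on {0,1}^ℕ. -/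
/-!
Write `c = -a²`, so `z² + c = (z - a)(z + a)` and `‖a‖ > 1`. Since `‖2‖ = 1`, one of the two
factors has norm at least `‖a‖`, so `z² + c` stays in the closed ball `B(0, ‖a‖)` only if `z` lies
in one of the two disjoint balls `B(±a, 1)`; outside `B(0, ‖a‖)` orbits escape. On each `B(±a, 1)`
the map multiplies distances by exactly `‖a‖`, and it maps that ball onto `B(0, ‖a‖)`. So the two
inverse branches form a contracting iterated function system on `B(0, ‖a‖)`. Its coding map
`{0,1}^ℕ → k` is continuous, intertwines the shift with `z ↦ z² + c`, and is injective with image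
`K_c` by expansion. Compactness of `{0,1}^ℕ` makes it a homeomorphism onto `K_c`.
-/

open Metric Set Filter Topology NNReal

structure IsContractingSystem {ι X : Type*} [MetricSpace X] (g : ι → X → X) (S : Set X)
    (r : ℝ≥0) (D : ℝ) : Prop where
  isClosed : IsClosed S
  mapsTo : ∀ i, MapsTo (g i) S S
  lipschitzOnWith : ∀ i, LipschitzOnWith r (g i) S
  lt_one : r < 1
  dist_le : ∀ x ∈ S, ∀ y ∈ S, dist x y ≤ D

def codingApprox {ι X : Type*} (g : ι → X → X) (x₀ : X) : ℕ → (ℕ → ι) → X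
  | 0, _ => x₀
  | n + 1, s => g (s 0) (codingApprox g x₀ n fun i => s (i + 1))

noncomputable def codingMap {ι X : Type*} [TopologicalSpace X] (g : ι → X → X) (x₀ : X)
    (s : ℕ → ι) : X :=
  haveI : Nonempty X := ⟨x₀⟩
  limUnder atTop fun n => codingApprox g x₀ n s

namespace IsContractingSystem

variable {ι X : Type*} [MetricSpace X] {g : ι → X → X} {S : Set X} {r : ℝ≥0} {D : ℝ}
  {x₀ : X}

theorem codingApprox_mem (h : IsContractingSystem g S r D) (hx₀ : x₀ ∈ S) (n : ℕ)
    (s : ℕ → ι) : codingApprox g x₀ n s ∈ S := by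
  induction n generalizing s with
  | zero => exact hx₀
  | succ n ih => exact h.mapsTo _ (ih _)

theorem dist_codingApprox_succ_le (h : IsContractingSystem g S r D) (hx₀ : x₀ ∈ S) (n : ℕ)
    (s : ℕ → ι) :
    dist (codingApprox g x₀ n s) (codingApprox g x₀ (n + 1) s) ≤ D * r ^ n := by
  induction n generalizing s with
  | zero => simpa [codingApprox] using h.dist_le _ hx₀ _ (h.codingApprox_mem hx₀ 1 s)
  | succ n ih =>
    calc dist (codingApprox g x₀ (n + 1) s) (codingApprox g x₀ (n + 2) s)
        ≤ r * dist (codingApprox g x₀ n _) (codingApprox g x₀ (n + 1) _) :=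
          (h.lipschitzOnWith (s 0)).dist_le_mul _ (h.codingApprox_mem hx₀ _ _) _
            (h.codingApprox_mem hx₀ _ _)
      _ ≤ r * (D * r ^ n) := by gcongr; exact ih _
      _ = D * r ^ (n + 1) := by ring

variable [CompleteSpace X]

theorem tendsto_codingApprox (h : IsContractingSystem g S r D) (hx₀ : x₀ ∈ S)
    (s : ℕ → ι) : Tendsto (fun n => codingApprox g x₀ n s) atTop (𝓝 (codingMap g x₀ s)) :=
  (cauchySeq_of_le_geometric _ _ h.lt_one
    (h.dist_codingApprox_succ_le hx₀ · s)).tendsto_limUnder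

theorem codingMap_mem (h : IsContractingSystem g S r D) (hx₀ : x₀ ∈ S) (s : ℕ → ι) :
    codingMap g x₀ s ∈ S :=
  h.isClosed.mem_of_tendsto (h.tendsto_codingApprox hx₀ s)
    (Eventually.of_forall (h.codingApprox_mem hx₀ · s))

theorem codingMap_eq (h : IsContractingSystem g S r D) (hx₀ : x₀ ∈ S) (s : ℕ → ι) :
    codingMap g x₀ s = g (s 0) (codingMap g x₀ fun i => s (i + 1)) := by
  have hg : ContinuousWithinAt (g (s 0)) S (codingMap g x₀ fun i => s (i + 1)) :=
    (h.lipschitzOnWith _).continuousOn _ (h.codingMap_mem hx₀ _)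
  have htail := h.tendsto_codingApprox hx₀ fun i => s (i + 1)
  refine tendsto_nhds_unique ((h.tendsto_codingApprox hx₀ s).comp (tendsto_add_atTop_nat 1))
    (hg.tendsto.comp (tendsto_nhdsWithin_iff.mpr ⟨htail, ?_⟩))
  exact Eventually.of_forall (h.codingApprox_mem hx₀ · _)

theorem dist_codingMap_le (h : IsContractingSystem g S r D) (hx₀ : x₀ ∈ S) {s t : ℕ → ι}
    {n : ℕ} (hst : ∀ i < n, s i = t i) :
    dist (codingMap g x₀ s) (codingMap g x₀ t) ≤ D * r ^ n := by
  induction n generalizing s t with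
  | zero => simpa using h.dist_le _ (h.codingMap_mem hx₀ s) _ (h.codingMap_mem hx₀ t)
  | succ n ih =>
    rw [h.codingMap_eq hx₀ s, h.codingMap_eq hx₀ t, hst 0 n.succ_pos]
    calc dist (g (t 0) (codingMap g x₀ _)) (g (t 0) (codingMap g x₀ _))
        ≤ r * dist (codingMap g x₀ fun i => s (i + 1)) (codingMap g x₀ fun i => t (i + 1)) :=
          (h.lipschitzOnWith _).dist_le_mul _ (h.codingMap_mem hx₀ _) _
            (h.codingMap_mem hx₀ _)
      _ ≤ r * (D * r ^ n) := by gcongr; exact ih fun i hi => hst (i + 1) (by omega)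
      _ = D * r ^ (n + 1) := by ring

theorem continuous_codingMap [TopologicalSpace ι] [DiscreteTopology ι]
    (h : IsContractingSystem g S r D) (hx₀ : x₀ ∈ S) : Continuous (codingMap g x₀) := by
  refine continuous_iff_continuousAt.mpr fun s => Metric.tendsto_nhds.mpr fun ε hε => ?_
  have hgeom : Tendsto (fun n => D * (r : ℝ) ^ n) atTop (𝓝 0) := by
    simpa using (tendsto_pow_atTop_nhds_zero_of_lt_one r.coe_nonneg h.lt_one).const_mul D
  obtain ⟨n, hn⟩ := (hgeom.eventually (gt_mem_nhds hε)).exists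
  filter_upwards [(PiNat.isOpen_cylinder _ s n).mem_nhds (PiNat.self_mem_cylinder s n)]
    with t ht
  exact (h.dist_codingMap_le hx₀ (PiNat.mem_cylinder_iff.mp ht)).trans_lt hn

end IsContractingSystem

namespace IsUltrametricDist

variable {E : Type*} [SeminormedAddCommGroup E] [IsUltrametricDist E]

theorem norm_eq_of_norm_sub_lt {x u : E} (h : ‖x - u‖ < ‖u‖) : ‖x‖ = ‖u‖ := by
  simpa [max_eq_left h.le] using norm_add_eq_max_of_norm_ne_norm (x := u) (y := x - u) h.ne'

theorem norm_eq_of_mem_closedBall {x u : E} {r : ℝ} (hr : r < ‖u‖) (hx : x ∈ closedBall u r) :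
    ‖x‖ = ‖u‖ :=
  norm_eq_of_norm_sub_lt ((mem_closedBall_iff_norm.mp hx).trans_lt hr)

end IsUltrametricDist

section Ultrametric

open IsUltrametricDist

variable {k : Type*} [NormedField k] [IsUltrametricDist k]

theorem norm_le_max_norm_sub_norm_add (h2 : ‖(2 : k)‖ = 1) (u z : k) :
    ‖u‖ ≤ max ‖z - u‖ ‖z + u‖ := by
  calc ‖u‖ = ‖(z + u) + -(z - u)‖ := by
        rw [show (z + u) + -(z - u) = 2 * u by ring, norm_mul, h2, one_mul]
    _ ≤ max ‖z + u‖ ‖-(z - u)‖ := norm_add_le_max _ _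
    _ = max ‖z - u‖ ‖z + u‖ := by rw [norm_neg, max_comm]

theorem mem_closedBall_or_mem_closedBall_neg (h2 : ‖(2 : k)‖ = 1) {u z : k}
    (h : ‖z ^ 2 - u ^ 2‖ ≤ ‖u‖) : z ∈ closedBall u 1 ∨ z ∈ closedBall (-u) 1 := by
  simp only [mem_closedBall_iff_norm, sub_neg_eq_add]
  have hmax := norm_le_max_norm_sub_norm_add h2 u z
  have hprod : ‖z - u‖ * ‖z + u‖ ≤ ‖u‖ := by
    rwa [← norm_mul, show (z - u) * (z + u) = z ^ 2 - u ^ 2 by ring]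
  by_contra! hfar
  rcases le_max_iff.mp hmax with hle | hle <;> nlinarith [norm_nonneg u]

theorem disjoint_closedBall_closedBall_neg (h2 : ‖(2 : k)‖ = 1) {u : k} (hu : 1 < ‖u‖) :
    Disjoint (closedBall u 1) (closedBall (-u) 1) := by
  refine Set.disjoint_left.mpr fun z hz hz' => ?_
  rw [mem_closedBall_iff_norm, sub_neg_eq_add] at *
  have := (norm_le_max_norm_sub_norm_add h2 u z).trans (max_le hz hz')
  linarith

theorem norm_sq_sub_sq_of_mem_closedBall (h2 : ‖(2 : k)‖ = 1) {u z w : k} (hu : 1 < ‖u‖)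
    (hz : z ∈ closedBall u 1) (hw : w ∈ closedBall u 1) :
    ‖z ^ 2 - w ^ 2‖ = ‖u‖ * ‖z - w‖ := by
  rw [mem_closedBall_iff_norm] at hz hw
  have hsum : ‖(z + w) - 2 * u‖ < ‖2 * u‖ := by
    rw [norm_mul, h2, one_mul, show z + w - 2 * u = (z - u) + (w - u) by ring]
    exact ((norm_add_le_max _ _).trans (max_le hz hw)).trans_lt hu
  rw [show z ^ 2 - w ^ 2 = (z + w) * (z - w) by ring, norm_mul, norm_eq_of_norm_sub_lt hsum,
    norm_mul, h2, one_mul]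

theorem norm_sq_sub_sq_of_norm_lt {u z : k} (h : ‖u‖ < ‖z‖) : ‖z ^ 2 - u ^ 2‖ = ‖z‖ ^ 2 := by
  rw [← norm_pow]
  exact norm_eq_of_norm_sub_lt (by
    rw [sub_sub_cancel_left, norm_neg, norm_pow, norm_pow]
    exact pow_lt_pow_left₀ h (norm_nonneg u) two_ne_zero)

theorem exists_mem_closedBall_sq_sub_sq_eq [IsAlgClosed k] (h2 : ‖(2 : k)‖ = 1) {u w : k}
    (hw : ‖w‖ ≤ ‖u‖) : ∃ z ∈ closedBall u 1, z ^ 2 - u ^ 2 = w := by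
  obtain ⟨z, hz⟩ := IsAlgClosed.exists_pow_nat_eq (w + u ^ 2) two_pos
  have hzw : z ^ 2 - u ^ 2 = w := by rw [hz]; ring
  rcases mem_closedBall_or_mem_closedBall_neg h2 (hzw ▸ hw) with hz' | hz'
  · exact ⟨z, hz', hzw⟩
  · refine ⟨-z, ?_, by rwa [neg_sq]⟩
    rw [mem_closedBall_iff_norm, show -z - u = -(z - -u) by ring, norm_neg]
    exact mem_closedBall_iff_norm.mp hz'

end Ultrametric

def filledJuliaSet {X : Type*} [Norm X] (f : X → X) : Set X :=
  {z | ∃ M : ℝ, ∀ n : ℕ, ‖f^[n] z‖ ≤ M}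

theorem iterate_mem_filledJuliaSet {X : Type*} [Norm X] {f : X → X} {z : X}
    (hz : z ∈ filledJuliaSet f) (n : ℕ) : f^[n] z ∈ filledJuliaSet f := by
  obtain ⟨M, hM⟩ := hz
  exact ⟨M, fun m => by rw [← Function.iterate_add_apply]; exact hM (m + n)⟩

theorem preimage_filledJuliaSet {X : Type*} [Norm X] (f : X → X) :
    f ⁻¹' filledJuliaSet f = filledJuliaSet f := by
  refine Subset.antisymm (fun z ⟨M, hM⟩ => ⟨max M ‖z‖, fun n => ?_⟩)
    fun z hz => iterate_mem_filledJuliaSet hz 1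
  cases n with
  | zero => exact le_max_right _ _
  | succ n => exact (hM n).trans (le_max_left _ _)

def quadMap {k : Type*} [Ring k] (c z : k) : k := z ^ 2 + c

theorem quadMap_eq {k : Type*} [Ring k] {a c : k} (ha : a ^ 2 = -c) (z : k) :
    quadMap c z = z ^ 2 - a ^ 2 := by
  rw [quadMap, ha, sub_neg_eq_add]

theorem norm_cond_neg_self {E : Type*} [SeminormedAddGroup E] (a : E) (b : Bool) :
    ‖cond b (-a) a‖ = ‖a‖ := by
  cases b <;> simp

theorem cond_neg_self_sq {R : Type*} [Ring R] (a : R) (b : Bool) :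
    (cond b (-a) a) ^ 2 = a ^ 2 := by
  cases b <;> simp

section Quadratic

variable {k : Type*} [NormedField k] [IsUltrametricDist k] {a c : k}

theorem norm_le_of_mem_filledJuliaSet (ha : a ^ 2 = -c) (ha1 : 1 < ‖a‖) {z : k}
    (hz : z ∈ filledJuliaSet (quadMap c)) : ‖z‖ ≤ ‖a‖ := by
  obtain ⟨M, hM⟩ := hz
  by_contra! hza
  have hz1 : 1 ≤ ‖z‖ := (ha1.trans hza).le
  have hgrowth : ∀ n, ‖z‖ ^ (n + 1) ≤ ‖(quadMap c)^[n] z‖ := by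
    intro n
    induction n with
    | zero => simp
    | succ n ih =>
      have hge : ‖z‖ ≤ ‖(quadMap c)^[n] z‖ := (le_self_pow₀ hz1 n.succ_ne_zero).trans ih
      rw [Function.iterate_succ_apply', quadMap_eq ha,
        norm_sq_sub_sq_of_norm_lt (hza.trans_le hge), pow_succ, sq]
      exact mul_le_mul ih hge (norm_nonneg z) (norm_nonneg _)
  obtain ⟨n, hn⟩ := pow_unbounded_of_one_lt M (ha1.trans hza)
  exact (hn.trans_le ((pow_le_pow_right₀ hz1 n.le_succ).trans ((hgrowth n).trans (hM n)))).false

theorem exists_iterate_mem_closedBall (ha : a ^ 2 = -c) (h2 : ‖(2 : k)‖ = 1) (ha1 : 1 < ‖a‖)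
    {z : k} (hz : z ∈ filledJuliaSet (quadMap c)) (n : ℕ) :
    ∃ b : Bool, (quadMap c)^[n] z ∈ closedBall (cond b (-a) a) 1 := by
  have hnext := norm_le_of_mem_filledJuliaSet ha ha1 (iterate_mem_filledJuliaSet hz (n + 1))
  rw [Function.iterate_succ_apply', quadMap_eq ha] at hnext
  rcases mem_closedBall_or_mem_closedBall_neg h2 hnext with h | h
  exacts [⟨false, h⟩, ⟨true, h⟩]

theorem eq_of_forall_iterate_mem_closedBall (ha : a ^ 2 = -c) (h2 : ‖(2 : k)‖ = 1)
    (ha1 : 1 < ‖a‖) {z w : k} (s : ℕ → Bool)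
    (hz : ∀ n, (quadMap c)^[n] z ∈ closedBall (cond (s n) (-a) a) 1)
    (hw : ∀ n, (quadMap c)^[n] w ∈ closedBall (cond (s n) (-a) a) 1) : z = w := by
  have hexpand : ∀ n, ‖(quadMap c)^[n] z - (quadMap c)^[n] w‖ = ‖a‖ ^ n * ‖z - w‖ := by
    intro n
    induction n with
    | zero => simp
    | succ n ih =>
      rw [Function.iterate_succ_apply', Function.iterate_succ_apply', quadMap_eq ha,
        quadMap_eq ha, sub_sub_sub_cancel_right, norm_sq_sub_sq_of_mem_closedBall h2
          ((norm_cond_neg_self a _).symm ▸ ha1) (hz n) (hw n), norm_cond_neg_self, ih, pow_succ,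
        mul_assoc, mul_left_comm]
  have hbdd : ∀ n, ‖a‖ ^ n * ‖z - w‖ ≤ 1 := fun n => by
    rw [← hexpand, ← dist_eq_norm]
    exact (dist_triangle_max _ _ _).trans (max_le (hz n) ((dist_comm _ _).trans_le (hw n)))
  by_contra hne
  have hpos : 0 < ‖z - w‖ := norm_pos_iff.mpr (sub_ne_zero.mpr hne)
  obtain ⟨n, hn⟩ := pow_unbounded_of_one_lt ‖z - w‖⁻¹ ha1
  exact (hbdd n).not_gt ((inv_lt_iff_one_lt_mul₀ hpos).mp hn)

open Classical in
noncomputable def quadBranch (c u w : k) : k :=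
  if h : ∃ z ∈ closedBall u 1, quadMap c z = w then h.choose else u

theorem quadBranch_spec [IsAlgClosed k] (h2 : ‖(2 : k)‖ = 1) {u w : k} (hu : u ^ 2 = -c)
    (hw : ‖w‖ ≤ ‖u‖) :
    quadBranch c u w ∈ closedBall u 1 ∧ quadMap c (quadBranch c u w) = w := by
  have hex : ∃ z ∈ closedBall u 1, quadMap c z = w := by
    simpa only [quadMap_eq hu] using exists_mem_closedBall_sq_sub_sq_eq h2 hw
  rw [quadBranch, dif_pos hex]
  exact hex.choose_spec

theorem isContractingSystem_quadBranch [IsAlgClosed k] (ha : a ^ 2 = -c)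
    (h2 : ‖(2 : k)‖ = 1) (ha1 : 1 < ‖a‖) :
    IsContractingSystem (fun b => quadBranch c (cond b (-a) a)) (closedBall 0 ‖a‖) ‖a‖₊⁻¹ ‖a‖ := by
  have hnorm := norm_cond_neg_self a
  have hspec : ∀ (b : Bool) {w : k}, w ∈ closedBall 0 ‖a‖ →
      quadBranch c (cond b (-a) a) w ∈ closedBall (cond b (-a) a) 1 ∧
        quadMap c (quadBranch c (cond b (-a) a) w) = w := fun b w hw =>
    quadBranch_spec h2 (by rw [cond_neg_self_sq, ha]) (by rwa [hnorm, ← mem_closedBall_zero_iff])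
  refine ⟨isClosed_closedBall, fun b w hw => ?_, fun b => ?_, ?_, fun x hx y hy => ?_⟩
  · rw [mem_closedBall_zero_iff,
      IsUltrametricDist.norm_eq_of_mem_closedBall (by rwa [hnorm]) (hspec b hw).1, hnorm]
  · refine LipschitzOnWith.of_dist_le_mul fun x hx y hy => le_of_eq ?_
    obtain ⟨hxb, hxf⟩ := hspec b hx
    obtain ⟨hyb, hyf⟩ := hspec b hy
    have hexpand :
        ‖x - y‖ = ‖a‖ * ‖quadBranch c (cond b (-a) a) x - quadBranch c (cond b (-a) a) y‖ := by
      conv_lhs => rw [← hxf, ← hyf, quadMap_eq ha, quadMap_eq ha, sub_sub_sub_cancel_right]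
      rw [norm_sq_sub_sq_of_mem_closedBall h2 (by rwa [hnorm]) hxb hyb, hnorm]
    rw [dist_eq_norm, dist_eq_norm, hexpand, NNReal.coe_inv, coe_nnnorm,
      inv_mul_cancel_left₀ (by positivity)]
  · exact inv_lt_one_of_one_lt₀ ha1
  · exact (IsUltrametricDist.dist_triangle_max x 0 y).trans
      (max_le (mem_closedBall.mp hx) ((dist_comm _ _).trans_le (mem_closedBall.mp hy)))

noncomputable def juliaCoding (c a : k) : (ℕ → Bool) → k :=
  codingMap (fun b => quadBranch c (cond b (-a) a)) 0

section Coding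

variable [IsAlgClosed k] [CompleteSpace k]

theorem juliaCoding_spec (ha : a ^ 2 = -c) (h2 : ‖(2 : k)‖ = 1) (ha1 : 1 < ‖a‖)
    (s : ℕ → Bool) :
    juliaCoding c a s ∈ closedBall (cond (s 0) (-a) a) 1 ∧
      quadMap c (juliaCoding c a s) = juliaCoding c a fun i => s (i + 1) := by
  have h := isContractingSystem_quadBranch ha h2 ha1
  have h0 : (0 : k) ∈ closedBall 0 ‖a‖ := mem_closedBall_self (norm_nonneg a)
  rw [juliaCoding, h.codingMap_eq h0]
  exact quadBranch_spec h2 (by rw [cond_neg_self_sq, ha])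
    (by rw [norm_cond_neg_self]; exact mem_closedBall_zero_iff.mp (h.codingMap_mem h0 _))

theorem continuous_juliaCoding (ha : a ^ 2 = -c) (h2 : ‖(2 : k)‖ = 1) (ha1 : 1 < ‖a‖) :
    Continuous (juliaCoding c a) :=
  (isContractingSystem_quadBranch ha h2 ha1).continuous_codingMap
    (mem_closedBall_self (norm_nonneg a))

theorem iterate_quadMap_juliaCoding (ha : a ^ 2 = -c) (h2 : ‖(2 : k)‖ = 1) (ha1 : 1 < ‖a‖)
    (n : ℕ) (s : ℕ → Bool) :
    (quadMap c)^[n] (juliaCoding c a s) = juliaCoding c a fun i => s (i + n) := by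
  induction n generalizing s with
  | zero => rfl
  | succ n ih => rw [Function.iterate_succ_apply, (juliaCoding_spec ha h2 ha1 s).2, ih]; rfl

theorem iterate_juliaCoding_mem_closedBall (ha : a ^ 2 = -c) (h2 : ‖(2 : k)‖ = 1)
    (ha1 : 1 < ‖a‖) (s : ℕ → Bool) (n : ℕ) :
    (quadMap c)^[n] (juliaCoding c a s) ∈ closedBall (cond (s n) (-a) a) 1 := by
  simpa [iterate_quadMap_juliaCoding ha h2 ha1] using
    (juliaCoding_spec ha h2 ha1 fun i => s (i + n)).1

theorem juliaCoding_injective (ha : a ^ 2 = -c) (h2 : ‖(2 : k)‖ = 1) (ha1 : 1 < ‖a‖) :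
    Function.Injective (juliaCoding c a) := by
  intro s t hst
  funext n
  have hs := iterate_juliaCoding_mem_closedBall ha h2 ha1 s n
  have ht := iterate_juliaCoding_mem_closedBall ha h2 ha1 t n
  rw [hst] at hs
  have hdisj := Set.disjoint_left.mp (disjoint_closedBall_closedBall_neg h2 ha1)
  cases hsn : s n <;> cases htn : t n <;> simp only [hsn, htn, cond_true, cond_false] at hs ht
  · rfl
  · exact (hdisj hs ht).elim
  · exact (hdisj ht hs).elim
  · rfl

theorem filledJuliaSet_quadMap_eq_range (ha : a ^ 2 = -c) (h2 : ‖(2 : k)‖ = 1)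
    (ha1 : 1 < ‖a‖) :
    filledJuliaSet (quadMap c) = range (juliaCoding c a) := by
  ext z
  constructor
  · intro hz
    choose s hs using exists_iterate_mem_closedBall ha h2 ha1 hz
    exact ⟨s, eq_of_forall_iterate_mem_closedBall ha h2 ha1 s
      (iterate_juliaCoding_mem_closedBall ha h2 ha1 s) hs⟩
  · rintro ⟨s, rfl⟩
    refine ⟨‖a‖, fun n => ?_⟩
    rw [iterate_quadMap_juliaCoding ha h2 ha1]
    exact mem_closedBall_zero_iff.mp ((isContractingSystem_quadBranch ha h2 ha1).codingMap_mem
      (mem_closedBall_self (norm_nonneg a)) _)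

theorem image_quadMap_range_juliaCoding (ha : a ^ 2 = -c) (h2 : ‖(2 : k)‖ = 1)
    (ha1 : 1 < ‖a‖) :
    quadMap c '' range (juliaCoding c a) = range (juliaCoding c a) := by
  rw [← range_comp]
  have hshift : (fun s : ℕ → Bool => fun i => s (i + 1)).Surjective :=
    fun t => ⟨fun i => Nat.rec false (fun j _ => t j) i, rfl⟩
  convert hshift.range_comp (juliaCoding c a) using 2
  funext s
  exact (juliaCoding_spec ha h2 ha1 s).2

end Coding

end Quadratic

theorem exists_homeomorph_range_semiconj {X Y : Type*} [TopologicalSpace X] [CompactSpace X]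
    [TopologicalSpace Y] [T2Space Y] {q : X → Y} (hq : Continuous q)
    (hinj : Function.Injective q) {σ : X → X} {f : Y → Y} (hconj : ∀ s, f (q s) = q (σ s)) :
    ∃ e : range q ≃ₜ X, ∀ x y : range q, f x = y → e y = σ (e x) := by
  let H : X ≃ₜ range q :=
    (hq.subtype_mk _).homeoOfEquivCompactToT2 (f := Equiv.ofInjective q hinj)
  refine ⟨H.symm, fun x y hxy => H.symm_apply_eq.mpr (Subtype.ext ?_)⟩
  change y.1 = q (σ (H.symm x))
  rw [← hxy, ← hconj]
  exact congrArg f (congrArg Subtype.val (H.apply_symm_apply x)).symm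

/-- Let k be an algebraically closed complete non-archimedean field of
residue characteristic ≠ 2 (i.e. ‖2‖ = 1), c ∈ k with |c| ≥ 4 (> 1), and P_c(z) = z² + c.
Then the filled Julia set K_c = {z : (|P_cⁿ(z)|)ₙ bounded} is non-empty, compact, totally
invariant (P_c⁻¹(K_c) = K_c = P_c(K_c)), and P_c on K_c is topologically conjugate to the
left shift on {0,1}^ℕ. -/
theorem montel_stmt18 {k : Type*} [NontriviallyNormedField k] [IsAlgClosed k]
    [CompleteSpace k] [IsUltrametricDist k] (c : k) (hc : 4 ≤ ‖c‖) (h2 : ‖(2 : k)‖ = 1) :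
    let P : k → k := fun z => z ^ 2 + c
    let K : Set k := {z : k | ∃ M : ℝ, ∀ n : ℕ, ‖P^[n] z‖ ≤ M}
    K.Nonempty ∧ IsCompact K ∧ P ⁻¹' K = K ∧ P '' K = K ∧
      ∃ e : K ≃ₜ (ℕ → Bool),
        ∀ x y : K, P (x : k) = (y : k) → ∀ i : ℕ, (e y) i = (e x) (i + 1) := by
  intro P K
  obtain ⟨a, ha⟩ := IsAlgClosed.exists_pow_nat_eq (-c) two_pos
  have ha1 : 1 < ‖a‖ := by
    have : ‖a‖ ^ 2 = ‖c‖ := by rw [← norm_pow, ha, norm_neg]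
    nlinarith [norm_nonneg a]
  have hK : K = range (juliaCoding c a) := filledJuliaSet_quadMap_eq_range ha h2 ha1
  have hq := continuous_juliaCoding ha h2 ha1
  obtain ⟨e, he⟩ := exists_homeomorph_range_semiconj hq (juliaCoding_injective ha h2 ha1)
    (σ := fun s i => s (i + 1)) fun s => (juliaCoding_spec ha h2 ha1 s).2
  refine ⟨hK ▸ range_nonempty _, hK ▸ isCompact_range hq, preimage_filledJuliaSet P, ?_, ?_⟩
  · rw [hK]
    exact image_quadMap_range_juliaCoding ha h2 ha1
  · rw [hK]
    exact ⟨e, fun x y hxy => congrFun (he x y hxy)⟩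
end
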